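/- arXiv:1906.08770 — 4 statements merged into one kernel-verified Lean document; each statement's English description precedes it below -/
import Mathlib

section
/- Let K_w ∈ ℝ^{N×N} and K_h ∈ ℝ^{L×L} be symmetric positive semidefinite kernel matrices whose eigenvalues are all at most λ_max > 0, fix p ≥ 1 and t_B > 0, and define the KMC hypothesis class F_K = { F ∈ ℝ^{N×L} : F = K_w B Cᵀ K_h for some B ∈ ℝ^{N×p}, C ∈ ℝ^{L×p} with trace(Bᵀ K_w B) + trace(Cᵀ K_h C) ≤ t_B }. Suppose that G > 0 is a constant such that for every t > 0 the nuclear-norm-ball class F_MC(t) = { F ∈ ℝ^{N×L} : ‖F‖_* ≤ t } satisfies R_n(F_MC(t)) ≤ G·q·t·(√N + √L). Then R_n(F_K) ≤ λ_max·G·q·t_B·(√N + √L). -/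
open Matrix

/-!
Every `F = K_w B Cᵀ K_h` of the KMC class lies in the nuclear-norm ball of radius `λ_max t_B`,
and the Rademacher complexity is monotone in the class (the suprema are finite because every
entry of `F` is bounded by `‖F‖_*`). For `F = X Yᵀ` with `X = K_w B`, `Y = K_h C`, diagonalize
`Vᵀ (Fᵀ F) V = Λ`; the partial isometry `U = F V Λ^{-1/2}` gives
`‖F‖_* = tr (Uᵀ F V) = ⟨Xᵀ U, Yᵀ V⟩ ≤ (‖X‖_F² + ‖Y‖_F²) / 2`, and
`‖K B‖_F² = tr (Bᵀ K² B) ≤ λ_max tr (Bᵀ K B)` because `K² ≤ λ_max K`.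
-/

/-- The nuclear norm of a real `N × L` matrix `F`: the trace of the positive semidefinite
square root of `Fᵀ F` (equivalently, the sum of the singular values of `F`). -/
noncomputable def nuclearNorm {N L : ℕ} (F : Matrix (Fin N) (Fin L) ℝ) : ℝ :=
  (let hA := Matrix.posSemidef_conjTranspose_mul_self F
   (hA.1.eigenvectorUnitary : Matrix (Fin L) (Fin L) ℝ) *
     diagonal ((RCLike.ofReal : ℝ → ℝ) ∘ Real.sqrt ∘ hA.1.eigenvalues) *
     (star hA.1.eigenvectorUnitary : Matrix (Fin L) (Fin L) ℝ)).trace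

/-- The transductive Rademacher complexity of a class `C` of real `N × L` matrices, for a set
`S_n` of index pairs and `q = 1/m + 1/u`:
`R_n(C) = q · E_σ [sup_{F∈C} ∑_{(i,j)∈S_n} σ_{ij} F_{ij}]`, where the `σ_{ij}`, `(i,j) ∈ S_n`,
are i.i.d. uniform on `{−1,+1}` (the expectation is the average over all `2^{NL}` sign
patterns). -/
noncomputable def TRC {N L : ℕ} (q : ℝ) (Sn : Finset (Fin N × Fin L))
    (C : Set (Matrix (Fin N) (Fin L) ℝ)) : ℝ :=
  q * ((∑ ε : Fin N × Fin L → Bool,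
      sSup ((fun F => ∑ p ∈ Sn, (if ε p then (1 : ℝ) else -1) * F p.1 p.2) '' C)) / 2 ^ (N * L))


namespace Matrix

section PosSemidef

variable {m n : Type*} [Fintype m] [Fintype n]

lemma PosSemidef.trace_transpose_mul_mul_nonneg {M : Matrix n n ℝ} (hM : M.PosSemidef)
    (B : Matrix n m ℝ) : 0 ≤ (Bᵀ * M * B).trace := by
  simpa only [conjTranspose_eq_transpose_of_trivial] using
    (hM.conjTranspose_mul_mul_same B).trace_nonneg

open scoped MatrixOrder in
lemma PosSemidef.exists_mul_self_eq [DecidableEq n] {M : Matrix n n ℝ}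
    (hM : M.PosSemidef) : ∃ S : Matrix n n ℝ, Sᵀ = S ∧ S * S = M := by
  have h0 : 0 ≤ M := nonneg_iff_posSemidef.mpr hM
  refine ⟨CFC.sqrt M, ?_, CFC.sqrt_mul_sqrt_self M h0⟩
  simpa only [conjTranspose_eq_transpose_of_trivial] using
    (nonneg_iff_posSemidef.mp (CFC.sqrt_nonneg M)).1.eq

lemma PosSemidef.trace_mul_nonneg [DecidableEq n] {M W : Matrix n n ℝ}
    (hM : M.PosSemidef) (hW : W.PosSemidef) : 0 ≤ (M * W).trace := by
  obtain ⟨S, hSt, rfl⟩ := hW.exists_mul_self_eq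
  have h := hM.trace_transpose_mul_mul_nonneg S
  rw [hSt, trace_mul_cycle] at h
  rwa [trace_mul_comm]

lemma PosSemidef.smul_sub_mul_self [DecidableEq n] {K : Matrix n n ℝ} {c : ℝ}
    (hK : K.PosSemidef) (hcK : (c • 1 - K).PosSemidef) : (c • K - K * K).PosSemidef := by
  obtain ⟨S, hSt, rfl⟩ := hK.exists_mul_self_eq
  have h := hcK.mul_mul_conjTranspose_same S
  convert h using 1
  simp only [conjTranspose_eq_transpose_of_trivial, hSt, Matrix.mul_sub, Matrix.sub_mul,
    Matrix.mul_smul, Matrix.smul_mul, Matrix.mul_one, Matrix.mul_assoc]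

lemma trace_transpose_mul_self_mul_le [DecidableEq n] {K : Matrix n n ℝ} {c : ℝ}
    (hK : K.PosSemidef) (hcK : (c • 1 - K).PosSemidef) (B : Matrix n m ℝ) :
    ((K * B)ᵀ * (K * B)).trace ≤ c * (Bᵀ * K * B).trace := by
  have h := (hK.smul_sub_mul_self hcK).trace_transpose_mul_mul_nonneg B
  have hKt : Kᵀ = K := by simpa only [conjTranspose_eq_transpose_of_trivial] using hK.1.eq
  rw [Matrix.mul_sub, Matrix.sub_mul, trace_sub, Matrix.mul_smul, Matrix.smul_mul, trace_smul,
    smul_eq_mul, sub_nonneg] at h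
  simpa only [transpose_mul, hKt, Matrix.mul_assoc] using h

lemma posSemidef_one_sub_mul_transpose [DecidableEq m] (U : Matrix m n ℝ)
    (hU : U * Uᵀ * U = U) : (1 - U * Uᵀ).PosSemidef := by
  have hidem : U * Uᵀ * (U * Uᵀ) = U * Uᵀ := by rw [← Matrix.mul_assoc, hU]
  have hproj : (1 - U * Uᵀ)ᵀ * (1 - U * Uᵀ) = 1 - U * Uᵀ := by
    rw [transpose_sub, transpose_one, transpose_mul, transpose_transpose]
    simp only [Matrix.sub_mul, Matrix.mul_sub, hidem, Matrix.one_mul, Matrix.mul_one, sub_self,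
      sub_zero]
  have h := posSemidef_conjTranspose_mul_self (1 - U * Uᵀ)
  rwa [conjTranspose_eq_transpose_of_trivial, hproj] at h

lemma trace_transpose_mul_mul_le [DecidableEq m] {U : Matrix m n ℝ} {M : Matrix m m ℝ}
    (hU : (1 - U * Uᵀ).PosSemidef) (hM : M.PosSemidef) : (Uᵀ * M * U).trace ≤ M.trace := by
  have h := hM.trace_mul_nonneg hU
  rw [Matrix.mul_sub, Matrix.mul_one, trace_sub, sub_nonneg] at h
  rwa [trace_mul_cycle, trace_mul_comm]

end PosSemidef

lemma trace_eq_sum_of_transpose_mul_mul_eq_diagonal {R n : Type*} [CommRing R]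
    [Fintype n] [DecidableEq n] {A V : Matrix n n R} {lam : n → R} (hVV : V * Vᵀ = 1)
    (hV : Vᵀ * A * V = diagonal lam) : A.trace = ∑ j, lam j := by
  rw [← trace_diagonal, ← hV, trace_mul_cycle, hVV, Matrix.one_mul]

section Factorization

variable {m n k : Type*} [Fintype m] [Fintype n] [Fintype k]

lemma sq_apply_le_trace_transpose_mul_self (F : Matrix m n ℝ) (i : m) (j : n) :
    F i j ^ 2 ≤ (Fᵀ * F).trace := by
  calc F i j ^ 2 ≤ ∑ i', F i' j ^ 2 :=
        Finset.single_le_sum (f := fun i' => F i' j ^ 2) (fun _ _ => sq_nonneg _)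
          (Finset.mem_univ i)
    _ ≤ ∑ j', ∑ i', F i' j' ^ 2 :=
        Finset.single_le_sum (f := fun j' => ∑ i', F i' j' ^ 2)
          (fun _ _ => Finset.sum_nonneg fun _ _ => sq_nonneg _) (Finset.mem_univ j)
    _ = (Fᵀ * F).trace := by simp only [trace, diag, mul_apply, transpose_apply, sq]

lemma trace_transpose_mul_le (P Q : Matrix m n ℝ) :
    (Pᵀ * Q).trace ≤ ((Pᵀ * P).trace + (Qᵀ * Q).trace) / 2 := by
  simp only [trace, diag, mul_apply, transpose_apply, ← Finset.sum_add_distrib, Finset.sum_div]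
  gcongr with j _ i _
  nlinarith [sq_nonneg (P i j - Q i j)]

lemma exists_partialIsometry_trace_eq_sum_sqrt [DecidableEq m] [DecidableEq n]
    {F : Matrix m n ℝ} {V : Matrix n n ℝ} {lam : n → ℝ} (hlam : ∀ j, 0 ≤ lam j)
    (hV : Vᵀ * (Fᵀ * F) * V = diagonal lam) :
    ∃ U : Matrix m n ℝ, (1 - U * Uᵀ).PosSemidef ∧ (Uᵀ * F * V).trace = ∑ j, √(lam j) := by
  -- `U = F V Λ^{-1/2}`, where `0⁻¹ = 0` kills the directions of `ker F`.
  set d : n → ℝ := fun j => (√(lam j))⁻¹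
  set U := F * V * diagonal d
  have hUF : Uᵀ * F * V = diagonal d * (Vᵀ * (Fᵀ * F) * V) := by
    simp only [U, transpose_mul, diagonal_transpose, Matrix.mul_assoc]
  have hUU : Uᵀ * U = diagonal (fun j => d j * lam j * d j) := by
    calc Uᵀ * U = Uᵀ * F * V * diagonal d := by simp only [U, Matrix.mul_assoc]
      _ = _ := by rw [hUF, hV, diagonal_mul_diagonal, diagonal_mul_diagonal]
  have hd (j : n) : d j * lam j = √(lam j) :=
    calc (√(lam j))⁻¹ * lam j = (√(lam j))⁻¹ * √(lam j) * √(lam j) := by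
          rw [mul_assoc, Real.mul_self_sqrt (hlam j)]
      _ = √(lam j) := inv_mul_mul_self _
  refine ⟨U, posSemidef_one_sub_mul_transpose _ ?_, ?_⟩
  · rw [Matrix.mul_assoc, hUU, Matrix.mul_assoc, diagonal_mul_diagonal]
    congr 2
    funext j
    rw [hd j, ← mul_assoc]
    simpa only [d, inv_inv] using mul_inv_mul_cancel (d j)
  · rw [hUF, hV, diagonal_mul_diagonal, trace_diagonal]
    exact Finset.sum_congr rfl fun j _ => hd j

lemma sum_sqrt_le_of_transpose_mul_mul_eq_diagonal [DecidableEq m] [DecidableEq n]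
    (X : Matrix m k ℝ) (Y : Matrix n k ℝ) {V : Matrix n n ℝ} {lam : n → ℝ}
    (hlam : ∀ j, 0 ≤ lam j) (hVV : V * Vᵀ = 1)
    (hV : Vᵀ * ((X * Yᵀ)ᵀ * (X * Yᵀ)) * V = diagonal lam) :
    ∑ j, √(lam j) ≤ ((Xᵀ * X).trace + (Yᵀ * Y).trace) / 2 := by
  obtain ⟨U, hU, htr⟩ := exists_partialIsometry_trace_eq_sum_sqrt hlam hV
  have hXX : (X * Xᵀ).PosSemidef := by
    simpa only [conjTranspose_eq_transpose_of_trivial] using posSemidef_self_mul_conjTranspose X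
  have hX : ((Xᵀ * U)ᵀ * (Xᵀ * U)).trace ≤ (Xᵀ * X).trace :=
    calc ((Xᵀ * U)ᵀ * (Xᵀ * U)).trace = (Uᵀ * (X * Xᵀ) * U).trace := by
          simp only [transpose_mul, transpose_transpose, Matrix.mul_assoc]
      _ ≤ (X * Xᵀ).trace := trace_transpose_mul_mul_le hU hXX
      _ = (Xᵀ * X).trace := trace_mul_comm _ _
  have hY : ((Yᵀ * V)ᵀ * (Yᵀ * V)).trace = (Yᵀ * Y).trace :=
    calc ((Yᵀ * V)ᵀ * (Yᵀ * V)).trace = (Yᵀ * V * (Yᵀ * V)ᵀ).trace := trace_mul_comm _ _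
      _ = (Yᵀ * Y).trace := by
          rw [transpose_mul, transpose_transpose, Matrix.mul_assoc, ← Matrix.mul_assoc V, hVV,
            Matrix.one_mul]
  calc ∑ j, √(lam j) = ((Xᵀ * U)ᵀ * (Yᵀ * V)).trace := by
        rw [← htr]
        simp only [transpose_mul, transpose_transpose, Matrix.mul_assoc]
    _ ≤ (((Xᵀ * U)ᵀ * (Xᵀ * U)).trace + ((Yᵀ * V)ᵀ * (Yᵀ * V)).trace) / 2 :=
        trace_transpose_mul_le _ _
    _ ≤ ((Xᵀ * X).trace + (Yᵀ * Y).trace) / 2 := by linarith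

end Factorization

end Matrix

section NuclearNorm

variable {N L : ℕ}

lemma exists_diagonalization_nuclearNorm_eq (F : Matrix (Fin N) (Fin L) ℝ) :
    ∃ (V : Matrix (Fin L) (Fin L) ℝ) (lam : Fin L → ℝ), (∀ j, 0 ≤ lam j) ∧ V * Vᵀ = 1 ∧
      Vᵀ * (Fᵀ * F) * V = diagonal lam ∧ nuclearNorm F = ∑ j, √(lam j) := by
  set hA := (posSemidef_conjTranspose_mul_self F).1
  have hstar : star (hA.eigenvectorUnitary : Matrix (Fin L) (Fin L) ℝ) =
      (hA.eigenvectorUnitary : Matrix (Fin L) (Fin L) ℝ)ᵀ := by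
    rw [star_eq_conjTranspose, conjTranspose_eq_transpose_of_trivial]
  refine ⟨hA.eigenvectorUnitary, hA.eigenvalues,
    (posSemidef_conjTranspose_mul_self F).eigenvalues_nonneg, ?_, ?_, ?_⟩
  · rw [← hstar]
    exact mem_unitaryGroup_iff.mp hA.eigenvectorUnitary.2
  · have h := hA.conjStarAlgAut_star_eigenvectorUnitary
    rw [Unitary.conjStarAlgAut_star_apply, hstar] at h
    rw [← conjTranspose_eq_transpose_of_trivial F]
    simpa [RCLike.ofReal_real_eq_id] using h
  · rw [nuclearNorm]
    dsimp only
    rw [trace_mul_cycle, mem_unitaryGroup_iff'.mp hA.eigenvectorUnitary.2, Matrix.one_mul,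
      trace_diagonal]
    simp [RCLike.ofReal_real_eq_id]

lemma abs_apply_le_nuclearNorm (F : Matrix (Fin N) (Fin L) ℝ) (i : Fin N) (j : Fin L) :
    |F i j| ≤ nuclearNorm F := by
  obtain ⟨V, lam, hlam, hVV, hV, hnorm⟩ := exists_diagonalization_nuclearNorm_eq F
  rw [hnorm]
  refine abs_le_of_sq_le_sq ?_ (Finset.sum_nonneg fun _ _ => Real.sqrt_nonneg _)
  calc F i j ^ 2 ≤ (Fᵀ * F).trace := sq_apply_le_trace_transpose_mul_self F i j
    _ = ∑ k, √(lam k) ^ 2 := by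
        rw [trace_eq_sum_of_transpose_mul_mul_eq_diagonal hVV hV]
        simp only [Real.sq_sqrt (hlam _)]
    _ ≤ (∑ k, √(lam k)) ^ 2 :=
        Finset.sum_sq_le_sq_sum_of_nonneg fun _ _ => Real.sqrt_nonneg _

lemma nuclearNorm_mul_transpose_le {k : Type*} [Fintype k] (X : Matrix (Fin N) k ℝ)
    (Y : Matrix (Fin L) k ℝ) :
    nuclearNorm (X * Yᵀ) ≤ ((Xᵀ * X).trace + (Yᵀ * Y).trace) / 2 := by
  obtain ⟨V, lam, hlam, hVV, hV, hnorm⟩ := exists_diagonalization_nuclearNorm_eq (X * Yᵀ)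
  rw [hnorm]
  exact sum_sqrt_le_of_transpose_mul_mul_eq_diagonal X Y hlam hVV hV

lemma nuclearNorm_mul_mul_transpose_mul_le {k : Type*} [Fintype k] {Kw : Matrix (Fin N) (Fin N) ℝ}
    {Kh : Matrix (Fin L) (Fin L) ℝ} {c : ℝ} (hKw : Kw.PosSemidef) (hKh : Kh.PosSemidef)
    (hKwc : (c • 1 - Kw).PosSemidef) (hKhc : (c • 1 - Kh).PosSemidef)
    (B : Matrix (Fin N) k ℝ) (C : Matrix (Fin L) k ℝ) :
    nuclearNorm (Kw * B * Cᵀ * Kh) ≤ c * ((Bᵀ * Kw * B).trace + (Cᵀ * Kh * C).trace) / 2 := by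
  have hKht : Khᵀ = Kh := by simpa only [conjTranspose_eq_transpose_of_trivial] using hKh.1.eq
  have hfactor : Kw * B * Cᵀ * Kh = (Kw * B) * (Kh * C)ᵀ := by
    rw [transpose_mul, hKht, Matrix.mul_assoc, Matrix.mul_assoc]
  rw [hfactor]
  refine (nuclearNorm_mul_transpose_le _ _).trans ?_
  linarith [trace_transpose_mul_self_mul_le hKw hKwc B, trace_transpose_mul_self_mul_le hKh hKhc C]

end NuclearNorm

lemma TRC_mono {N L : ℕ} {q c : ℝ} (hq : 0 ≤ q) (Sn : Finset (Fin N × Fin L))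
    {C D : Set (Matrix (Fin N) (Fin L) ℝ)} (hCD : C ⊆ D) (hC : C.Nonempty)
    (hD : ∀ F ∈ D, ∀ i j, |F i j| ≤ c) : TRC q Sn C ≤ TRC q Sn D := by
  unfold TRC
  gcongr with ε
  · refine ⟨Sn.card * c, ?_⟩
    rintro _ ⟨F, hF, rfl⟩
    calc ∑ p ∈ Sn, (if ε p then (1 : ℝ) else -1) * F p.1 p.2 ≤ ∑ _p ∈ Sn, c := by
          gcongr with p
          have := abs_le.mp (hD F hF p.1 p.2)
          split_ifs <;> linarith
      _ = Sn.card * c := by rw [Finset.sum_const, nsmul_eq_mul]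
  · exact hC.image _

theorem trc_kmc_le_general {N L : ℕ} (m u : ℕ)
    (Sn : Finset (Fin N × Fin L))
    (q : ℝ) (hq : q = 1 / m + 1 / u)
    (Kw : Matrix (Fin N) (Fin N) ℝ) (Kh : Matrix (Fin L) (Fin L) ℝ)
    (hKw : Kw.PosSemidef) (hKh : Kh.PosSemidef)
    (lamMax : ℝ) (hlam : 0 < lamMax)
    (hKwlam : (lamMax • (1 : Matrix (Fin N) (Fin N) ℝ) - Kw).PosSemidef)
    (hKhlam : (lamMax • (1 : Matrix (Fin L) (Fin L) ℝ) - Kh).PosSemidef)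
    (p : ℕ) (tB : ℝ) (htB : 0 < tB)
    (G : ℝ)
    (hMC : ∀ t > (0 : ℝ), TRC q Sn {F : Matrix (Fin N) (Fin L) ℝ | nuclearNorm F ≤ t} ≤
      G * q * t * (Real.sqrt N + Real.sqrt L)) :
    TRC q Sn {F : Matrix (Fin N) (Fin L) ℝ |
        ∃ (B : Matrix (Fin N) (Fin p) ℝ) (C : Matrix (Fin L) (Fin p) ℝ),
          F = Kw * B * Cᵀ * Kh ∧ (Bᵀ * Kw * B).trace + (Cᵀ * Kh * C).trace ≤ tB} ≤
      lamMax * G * q * tB * (Real.sqrt N + Real.sqrt L) := by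
  have hq0 : 0 ≤ q := by rw [hq]; positivity
  refine (TRC_mono (D := {F | nuclearNorm F ≤ lamMax * tB}) hq0 Sn ?_ ?_
    fun F hF i j => (abs_apply_le_nuclearNorm F i j).trans hF).trans ?_
  · rintro _ ⟨B, C, rfl, hBC⟩
    calc nuclearNorm (Kw * B * Cᵀ * Kh)
        ≤ lamMax * ((Bᵀ * Kw * B).trace + (Cᵀ * Kh * C).trace) / 2 :=
          nuclearNorm_mul_mul_transpose_mul_le hKw hKh hKwlam hKhlam B C
      _ ≤ lamMax * tB := by nlinarith
  · exact ⟨0, 0, 0, by simp, by simpa using htB.le⟩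
  · calc _ ≤ G * q * (lamMax * tB) * (Real.sqrt N + Real.sqrt L) := hMC _ (by positivity)
      _ = lamMax * G * q * tB * (Real.sqrt N + Real.sqrt L) := by ring

/-- Let `K_w ∈ ℝ^{N×N}`, `K_h ∈ ℝ^{L×L}` be symmetric positive semidefinite
kernel matrices whose eigenvalues are all at most `λ_max > 0` (expressed as `λ_max • 1 - K`
being positive semidefinite), fix `p ≥ 1` and `t_B > 0`, and let `F_K` be the KMC hypothesis
class of matrices `K_w B Cᵀ K_h` with `trace(Bᵀ K_w B) + trace(Cᵀ K_h C) ≤ t_B`.  If `G > 0` is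
such that for every `t > 0` the nuclear-norm ball `{F : ‖F‖_* ≤ t}` has transductive Rademacher
complexity at most `G q t (√N + √L)`, then
`R_n(F_K) ≤ λ_max G q t_B (√N + √L)`. -/
theorem trc_kmc_le {N L : ℕ} (m u : ℕ) (hm : 1 ≤ m) (hu : 1 ≤ u)
    (Sn : Finset (Fin N × Fin L)) (hSn : Sn.card = m + u)
    (q : ℝ) (hq : q = 1 / m + 1 / u)
    (Kw : Matrix (Fin N) (Fin N) ℝ) (Kh : Matrix (Fin L) (Fin L) ℝ)
    (hKw : Kw.PosSemidef) (hKh : Kh.PosSemidef)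
    (lamMax : ℝ) (hlam : 0 < lamMax)
    (hKwlam : (lamMax • (1 : Matrix (Fin N) (Fin N) ℝ) - Kw).PosSemidef)
    (hKhlam : (lamMax • (1 : Matrix (Fin L) (Fin L) ℝ) - Kh).PosSemidef)
    (p : ℕ) (hp : 1 ≤ p) (tB : ℝ) (htB : 0 < tB)
    (G : ℝ) (hG : 0 < G)
    (hMC : ∀ t > (0 : ℝ), TRC q Sn {F : Matrix (Fin N) (Fin L) ℝ | nuclearNorm F ≤ t} ≤
      G * q * t * (Real.sqrt N + Real.sqrt L)) :
    TRC q Sn {F : Matrix (Fin N) (Fin L) ℝ |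
        ∃ (B : Matrix (Fin N) (Fin p) ℝ) (C : Matrix (Fin L) (Fin p) ℝ),
          F = Kw * B * Cᵀ * Kh ∧ (Bᵀ * Kw * B).trace + (Cᵀ * Kh * C).trace ≤ tB} ≤
      lamMax * G * q * tB * (Real.sqrt N + Real.sqrt L) :=
  trc_kmc_le_general m u Sn q hq Kw Kh hKw hKh lamMax hlam hKwlam hKhlam p tB htB G hMC
end

section
/- Let Φ_w ∈ ℝ^{N×d_w} and Φ_h ∈ ℝ^{L×d_h}, let K = (Φ_h ⊗ Φ_w)(Φ_h ⊗ Φ_w)ᵀ ∈ ℝ^{NL×NL} where ⊗ denotes the Kronecker product, fix p ≥ 1, t_w > 0, t_h > 0, and define the hypothesis class F_I = { F ∈ ℝ^{N×L} : F = Φ_w A_w A_hᵀ Φ_hᵀ for some A_w ∈ ℝ^{d_w×p}, A_h ∈ ℝ^{d_h×p} with ‖A_w‖_F² ≤ t_w and ‖A_h‖_F² ≤ t_h }. Let S_n ∈ {0,1}^{n×NL} be the binary selection matrix whose rows are the canonical basis rows of ℝ^{NL} corresponding (under column-major vectorization) to the index pairs in S_n. Then R_n(F_I) ≤ q·√(t_w·t_h)·√(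 trace(S_n K S_nᵀ) ). -/
open Matrix Kronecker

/-- The squared Frobenius norm of a real matrix: the sum of the squares of its entries. -/
def frobSq {m n : ℕ} (A : Matrix (Fin m) (Fin n) ℝ) : ℝ :=
  ∑ i, ∑ j, (A i j) ^ 2

/-- The binary selection matrix of the index set `S_n`: its rows are the canonical basis rows
of `ℝ^{NL}` corresponding, under column-major vectorization (vector index `(j, i)` for matrix
entry `(i, j)`), to the index pairs in `S_n`. -/
def selMat {N L : ℕ} (Sn : Finset (Fin N × Fin L)) :
    Matrix {x // x ∈ Sn} (Fin L × Fin N) ℝ :=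
  Matrix.of fun r c => if (r.1.2, r.1.1) = c then 1 else 0

/- ########################  Auxiliary lemmas  ######################## -/

private lemma sum_sgn_mul {A : Type*} [Fintype A] [DecidableEq A] {r r' : A} (h : r ≠ r') :
    ∑ ε : A → Bool, (if ε r then (1:ℝ) else -1) * (if ε r' then (1:ℝ) else -1) = 0 := by
  have hinv : Function.Involutive (fun ε : A → Bool => Function.update ε r (!ε r)) := by
    intro ε; funext a
    by_cases ha : a = r
    · subst ha; simp
    · simp [Function.update_of_ne ha]
  have hsum := Equiv.sum_comp (Function.Involutive.toPerm _ hinv)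
      (fun ε : A → Bool => (if ε r then (1:ℝ) else -1) * (if ε r' then (1:ℝ) else -1))
  have hneg : ∀ ε : A → Bool,
      ((if Function.update ε r (!ε r) r then (1:ℝ) else -1) *
        (if Function.update ε r (!ε r) r' then (1:ℝ) else -1))
      = -((if ε r then (1:ℝ) else -1) * (if ε r' then (1:ℝ) else -1)) := by
    intro ε
    rw [Function.update_self, Function.update_of_ne (Ne.symm h)]
    cases hb : ε r <;> cases hb' : ε r' <;> norm_num
  have hfun : ∀ ε : A → Bool, (Function.Involutive.toPerm _ hinv) ε = Function.update ε r (!ε r) :=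
    fun ε => rfl
  simp only [hfun, hneg, Finset.sum_neg_distrib] at hsum
  linarith

private lemma sum_mul_le_sqrt {ι : Type*} (s : Finset ι) (f g : ι → ℝ) :
    ∑ i ∈ s, f i * g i ≤ Real.sqrt (∑ i ∈ s, f i ^ 2) * Real.sqrt (∑ i ∈ s, g i ^ 2) := by
  calc ∑ i ∈ s, f i * g i ≤ |∑ i ∈ s, f i * g i| := le_abs_self _
    _ = Real.sqrt ((∑ i ∈ s, f i * g i) ^ 2) := (Real.sqrt_sq_eq_abs _).symm
    _ ≤ Real.sqrt ((∑ i ∈ s, f i ^ 2) * ∑ i ∈ s, g i ^ 2) :=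
        Real.sqrt_le_sqrt (Finset.sum_mul_sq_le_sq_mul_sq s f g)
    _ = _ := Real.sqrt_mul (by positivity) _

private lemma sum_sqrt_le {ι : Type*} [Fintype ι] (f : ι → ℝ) (hf : ∀ i, 0 ≤ f i) :
    ∑ i, Real.sqrt (f i) ≤ Real.sqrt ((Fintype.card ι) * ∑ i, f i) := by
  have h := Finset.sum_mul_sq_le_sq_mul_sq Finset.univ (fun _ => (1:ℝ)) (fun i => Real.sqrt (f i))
  simp only [one_mul, one_pow, mul_one, Finset.sum_const, Finset.card_univ, nsmul_eq_mul,
    Real.sq_sqrt (hf _)] at h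
  calc ∑ i, Real.sqrt (f i) = Real.sqrt ((∑ i, Real.sqrt (f i)) ^ 2) := by
        rw [Real.sqrt_sq (by positivity)]
    _ ≤ Real.sqrt ((Fintype.card ι) * ∑ i, f i) := Real.sqrt_le_sqrt h

/-- The trace of `S_n K S_nᵀ` with `K = M Mᵀ` is the sum of the squared entries of the
selected rows of `M`. -/
private lemma trace_sel {N L : ℕ} {D : Type*} [Fintype D] (Sn : Finset (Fin N × Fin L))
    (M : Matrix (Fin L × Fin N) D ℝ) :
    (selMat Sn * (M * Mᵀ) * (selMat Sn)ᵀ).trace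
      = ∑ r ∈ Sn, ∑ d, (M (r.2, r.1) d) ^ 2 := by
  have hentry : ∀ r : {x // x ∈ Sn}, (selMat Sn * (M * Mᵀ) * (selMat Sn)ᵀ) r r
      = ∑ d, (M (r.1.2, r.1.1) d) ^ 2 := by
    intro r
    simp [Matrix.mul_apply, selMat, Matrix.transpose_apply, ite_mul, mul_ite, pow_two,
      Finset.sum_ite_eq, Finset.sum_ite_eq', Finset.mul_sum]
  rw [Matrix.trace]
  simp only [Matrix.diag_apply, hentry]
  rw [Finset.univ_eq_attach, Finset.sum_attach Sn (fun x => ∑ d, (M (x.2, x.1) d) ^ 2)]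

/-- Vectorization identity: the entries of `Φ_w A_w A_hᵀ Φ_hᵀ` through the Kronecker product. -/
private lemma entry_eq {N L dw dh pp : ℕ} (Φw : Matrix (Fin N) (Fin dw) ℝ)
    (Φh : Matrix (Fin L) (Fin dh) ℝ) (Aw : Matrix (Fin dw) (Fin pp) ℝ)
    (Ah : Matrix (Fin dh) (Fin pp) ℝ) (i : Fin N) (j : Fin L) :
    (Φw * Aw * Ahᵀ * Φhᵀ) i j
      = ∑ d : Fin dh × Fin dw, (Φh ⊗ₖ Φw) (j, i) d * (∑ k, Aw d.2 k * Ah d.1 k) := by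
  simp only [Matrix.mul_apply, Matrix.transpose_apply, Matrix.kroneckerMap_apply,
    Fintype.sum_prod_type]
  refine Finset.sum_congr rfl fun b _ => ?_
  simp only [Finset.sum_mul, Finset.mul_sum]
  rw [Finset.sum_comm]
  exact Finset.sum_congr rfl fun a _ => Finset.sum_congr rfl fun k _ => by ring

/-- Second moment of the Rademacher average: cross terms vanish. -/
private lemma sum_eps {N L : ℕ} {D : Type*} [Fintype D] (Sn : Finset (Fin N × Fin L))
    (M : Matrix (Fin L × Fin N) D ℝ) :
    ∑ ε : Fin N × Fin L → Bool, ∑ d,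
        (∑ r ∈ Sn, (if ε r then (1:ℝ) else -1) * M (r.2, r.1) d) ^ 2
      = 2 ^ (N * L) * ∑ r ∈ Sn, ∑ d, (M (r.2, r.1) d) ^ 2 := by
  have hcross : ∀ r r' : Fin N × Fin L,
      ∑ ε : Fin N × Fin L → Bool, (if ε r then (1:ℝ) else -1) * (if ε r' then (1:ℝ) else -1)
        = if r = r' then (2:ℝ) ^ (N * L) else 0 := by
    intro r r'
    by_cases hrr : r = r'
    · subst hrr
      rw [if_pos rfl]
      have h1 : ∀ ε : Fin N × Fin L → Bool,
          (if ε r then (1:ℝ) else -1) * (if ε r then (1:ℝ) else -1) = 1 := by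
        intro ε; cases ε r <;> norm_num
      rw [Finset.sum_congr rfl fun ε _ => h1 ε]
      simp [Finset.card_univ, Fintype.card_fun]
    · rw [if_neg hrr]; exact sum_sgn_mul hrr
  calc ∑ ε : Fin N × Fin L → Bool, ∑ d,
        (∑ r ∈ Sn, (if ε r then (1:ℝ) else -1) * M (r.2, r.1) d) ^ 2
      = ∑ d, ∑ ε : Fin N × Fin L → Bool,
          (∑ r ∈ Sn, (if ε r then (1:ℝ) else -1) * M (r.2, r.1) d) ^ 2 := Finset.sum_comm
    _ = ∑ d, ∑ r ∈ Sn, ∑ r' ∈ Sn, (M (r.2, r.1) d * M (r'.2, r'.1) d) *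
          ∑ ε : Fin N × Fin L → Bool,
            (if ε r then (1:ℝ) else -1) * (if ε r' then (1:ℝ) else -1) := by
        refine Finset.sum_congr rfl fun d _ => ?_
        have expand : ∀ ε : Fin N × Fin L → Bool,
            (∑ r ∈ Sn, (if ε r then (1:ℝ) else -1) * M (r.2, r.1) d) ^ 2
            = ∑ r ∈ Sn, ∑ r' ∈ Sn, (M (r.2, r.1) d * M (r'.2, r'.1) d) *
                ((if ε r then (1:ℝ) else -1) * (if ε r' then (1:ℝ) else -1)) := by
          intro ε
          rw [pow_two, Finset.sum_mul_sum]
          exact Finset.sum_congr rfl fun r _ => Finset.sum_congr rfl fun r' _ => by ring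
        rw [Finset.sum_congr rfl fun ε _ => expand ε, Finset.sum_comm]
        refine Finset.sum_congr rfl fun r _ => ?_
        rw [Finset.sum_comm]
        refine Finset.sum_congr rfl fun r' _ => ?_
        rw [Finset.mul_sum]
    _ = ∑ d, ∑ r ∈ Sn, (M (r.2, r.1) d) ^ 2 * 2 ^ (N * L) := by
        refine Finset.sum_congr rfl fun d _ => Finset.sum_congr rfl fun r hr => ?_
        rw [Finset.sum_congr rfl fun r' _ => by rw [hcross r r']]
        simp only [mul_ite, mul_zero]
        rw [Finset.sum_ite_eq Sn r fun r' => M (r.2, r.1) d * M (r'.2, r'.1) d * 2 ^ (N * L),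
          if_pos hr, pow_two]
    _ = 2 ^ (N * L) * ∑ r ∈ Sn, ∑ d, (M (r.2, r.1) d) ^ 2 := by
        rw [Finset.sum_comm, Finset.mul_sum]
        refine Finset.sum_congr rfl fun r _ => ?_
        rw [Finset.mul_sum]
        exact Finset.sum_congr rfl fun d _ => by ring

/-- The squared Frobenius norm of `A_w A_hᵀ` (in vectorized form) is at most the product of the
squared Frobenius norms. -/
private lemma frob_bound {dw dh pp : ℕ} (Aw : Matrix (Fin dw) (Fin pp) ℝ)
    (Ah : Matrix (Fin dh) (Fin pp) ℝ) :
    ∑ d : Fin dh × Fin dw, (∑ k, Aw d.2 k * Ah d.1 k) ^ 2 ≤ frobSq Aw * frobSq Ah := by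
  have h1 : ∑ d : Fin dh × Fin dw, (∑ k, Aw d.2 k * Ah d.1 k) ^ 2
      ≤ ∑ d : Fin dh × Fin dw, (∑ k, Aw d.2 k ^ 2) * (∑ k, Ah d.1 k ^ 2) :=
    Finset.sum_le_sum fun d _ =>
      Finset.sum_mul_sq_le_sq_mul_sq Finset.univ (fun k => Aw d.2 k) (fun k => Ah d.1 k)
  refine h1.trans_eq ?_
  rw [frobSq, frobSq, Fintype.sum_prod_type, Finset.sum_comm, Finset.sum_mul_sum]

/- ########################  Main theorem  ######################## -/

/-- Let `Φ_w ∈ ℝ^{N×d_w}`, `Φ_h ∈ ℝ^{L×d_h}`,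
`K = (Φ_h ⊗ Φ_w)(Φ_h ⊗ Φ_w)ᵀ`, fix `p ≥ 1`, `t_w > 0`, `t_h > 0`, and let `F_I` be the class
of matrices `Φ_w A_w A_hᵀ Φ_hᵀ` with `‖A_w‖_F² ≤ t_w` and `‖A_h‖_F² ≤ t_h`.  Then, with `S_n`
the binary selection matrix of the index set `S_n`,
`R_n(F_I) ≤ q √(t_w t_h) √(trace(S_n K S_nᵀ))`. -/
theorem trc_inductive_le {N L dw dh : ℕ} (m u : ℕ) (hm : 1 ≤ m) (hu : 1 ≤ u)
    (Sn : Finset (Fin N × Fin L)) (hSn : Sn.card = m + u)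
    (q : ℝ) (hq : q = 1 / m + 1 / u)
    (Φw : Matrix (Fin N) (Fin dw) ℝ) (Φh : Matrix (Fin L) (Fin dh) ℝ)
    (p : ℕ) (hp : 1 ≤ p) (tw th : ℝ) (htw : 0 < tw) (hth : 0 < th) :
    TRC q Sn {F : Matrix (Fin N) (Fin L) ℝ |
        ∃ (Aw : Matrix (Fin dw) (Fin p) ℝ) (Ah : Matrix (Fin dh) (Fin p) ℝ),
          F = Φw * Aw * Ahᵀ * Φhᵀ ∧ frobSq Aw ≤ tw ∧ frobSq Ah ≤ th} ≤
      q * Real.sqrt (tw * th) *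
        Real.sqrt ((selMat Sn * ((Φh ⊗ₖ Φw) * (Φh ⊗ₖ Φw)ᵀ) * (selMat Sn)ᵀ).trace) := by
  set M : Matrix (Fin L × Fin N) (Fin dh × Fin dw) ℝ := Φh ⊗ₖ Φw with hM
  set T : ℝ := ∑ r ∈ Sn, ∑ d, (M (r.2, r.1) d) ^ 2 with hT
  have hT0 : 0 ≤ T := by
    rw [hT]; positivity
  have htrace : (selMat Sn * (M * Mᵀ) * (selMat Sn)ᵀ).trace = T := trace_sel Sn M
  have hq0 : 0 ≤ q := by
    rw [hq]
    have : (0:ℝ) < m := by exact_mod_cast hm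
    have : (0:ℝ) < u := by exact_mod_cast hu
    positivity
  -- per-ε bound on the supremum
  have hsup : ∀ ε : Fin N × Fin L → Bool,
      sSup ((fun F => ∑ p ∈ Sn, (if ε p then (1 : ℝ) else -1) * F p.1 p.2) ''
          {F : Matrix (Fin N) (Fin L) ℝ |
            ∃ (Aw : Matrix (Fin dw) (Fin p) ℝ) (Ah : Matrix (Fin dh) (Fin p) ℝ),
              F = Φw * Aw * Ahᵀ * Φhᵀ ∧ frobSq Aw ≤ tw ∧ frobSq Ah ≤ th})
        ≤ Real.sqrt (tw * th) *
            Real.sqrt (∑ d, (∑ r ∈ Sn, (if ε r then (1:ℝ) else -1) * M (r.2, r.1) d) ^ 2) := by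
    intro ε
    refine Real.sSup_le ?_ (by positivity)
    rintro x ⟨F, ⟨Aw, Ah, rfl, hAw, hAh⟩, rfl⟩
    have key : ∑ p ∈ Sn, (if ε p then (1 : ℝ) else -1) * (Φw * Aw * Ahᵀ * Φhᵀ) p.1 p.2
        = ∑ d, (∑ r ∈ Sn, (if ε r then (1:ℝ) else -1) * M (r.2, r.1) d) *
            (∑ k, Aw d.2 k * Ah d.1 k) := by
      calc ∑ p ∈ Sn, (if ε p then (1 : ℝ) else -1) * (Φw * Aw * Ahᵀ * Φhᵀ) p.1 p.2
          = ∑ p ∈ Sn, ∑ d, (if ε p then (1 : ℝ) else -1) *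
              (M (p.2, p.1) d * (∑ k, Aw d.2 k * Ah d.1 k)) := by
            refine Finset.sum_congr rfl fun pr _ => ?_
            rw [entry_eq Φw Φh Aw Ah pr.1 pr.2, Finset.mul_sum]
        _ = ∑ d, ∑ p ∈ Sn, (if ε p then (1 : ℝ) else -1) *
              (M (p.2, p.1) d * (∑ k, Aw d.2 k * Ah d.1 k)) := Finset.sum_comm
        _ = ∑ d, (∑ r ∈ Sn, (if ε r then (1:ℝ) else -1) * M (r.2, r.1) d) *
              (∑ k, Aw d.2 k * Ah d.1 k) := by
            refine Finset.sum_congr rfl fun d _ => ?_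
            rw [Finset.sum_mul]
            exact Finset.sum_congr rfl fun pr _ => by ring
    have hB : ∑ d : Fin dh × Fin dw, (∑ k, Aw d.2 k * Ah d.1 k) ^ 2 ≤ tw * th :=
      (frob_bound Aw Ah).trans (mul_le_mul hAw hAh (by rw [frobSq]; positivity) htw.le)
    have : ∑ d, (∑ r ∈ Sn, (if ε r then (1:ℝ) else -1) * M (r.2, r.1) d) *
            (∑ k, Aw d.2 k * Ah d.1 k)
        ≤ Real.sqrt (tw * th) *
            Real.sqrt (∑ d, (∑ r ∈ Sn, (if ε r then (1:ℝ) else -1) * M (r.2, r.1) d) ^ 2) := by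
      calc ∑ d, (∑ r ∈ Sn, (if ε r then (1:ℝ) else -1) * M (r.2, r.1) d) *
            (∑ k, Aw d.2 k * Ah d.1 k)
        ≤ Real.sqrt (∑ d, (∑ r ∈ Sn, (if ε r then (1:ℝ) else -1) * M (r.2, r.1) d) ^ 2) *
            Real.sqrt (∑ d : Fin dh × Fin dw, (∑ k, Aw d.2 k * Ah d.1 k) ^ 2) :=
          sum_mul_le_sqrt _ _ _
      _ ≤ Real.sqrt (∑ d, (∑ r ∈ Sn, (if ε r then (1:ℝ) else -1) * M (r.2, r.1) d) ^ 2) *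
            Real.sqrt (tw * th) := by
          exact mul_le_mul_of_nonneg_left (Real.sqrt_le_sqrt hB) (Real.sqrt_nonneg _)
      _ = _ := mul_comm _ _
    exact le_of_eq_of_le key this
  -- average over ε
  have hcard : (Fintype.card (Fin N × Fin L → Bool) : ℝ) = 2 ^ (N * L) := by
    simp [Fintype.card_fun]
  have havg : (∑ ε : Fin N × Fin L → Bool,
      sSup ((fun F => ∑ p ∈ Sn, (if ε p then (1 : ℝ) else -1) * F p.1 p.2) ''
          {F : Matrix (Fin N) (Fin L) ℝ |
            ∃ (Aw : Matrix (Fin dw) (Fin p) ℝ) (Ah : Matrix (Fin dh) (Fin p) ℝ),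
              F = Φw * Aw * Ahᵀ * Φhᵀ ∧ frobSq Aw ≤ tw ∧ frobSq Ah ≤ th})) / 2 ^ (N * L)
      ≤ Real.sqrt (tw * th) * Real.sqrt T := by
    rw [div_le_iff₀ (by positivity)]
    calc (∑ ε : Fin N × Fin L → Bool, sSup _)
        ≤ ∑ ε : Fin N × Fin L → Bool, Real.sqrt (tw * th) *
            Real.sqrt (∑ d, (∑ r ∈ Sn, (if ε r then (1:ℝ) else -1) * M (r.2, r.1) d) ^ 2) :=
          Finset.sum_le_sum fun ε _ => hsup ε
      _ = Real.sqrt (tw * th) * ∑ ε : Fin N × Fin L → Bool,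
            Real.sqrt (∑ d, (∑ r ∈ Sn, (if ε r then (1:ℝ) else -1) * M (r.2, r.1) d) ^ 2) := by
          rw [Finset.mul_sum]
      _ ≤ Real.sqrt (tw * th) * Real.sqrt ((Fintype.card (Fin N × Fin L → Bool)) *
            ∑ ε : Fin N × Fin L → Bool,
              ∑ d, (∑ r ∈ Sn, (if ε r then (1:ℝ) else -1) * M (r.2, r.1) d) ^ 2) :=
          mul_le_mul_of_nonneg_left
            (sum_sqrt_le _ (fun ε => by positivity)) (Real.sqrt_nonneg _)
      _ = Real.sqrt (tw * th) * Real.sqrt ((2:ℝ) ^ (N * L) * (2 ^ (N * L) * T)) := by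
          rw [hcard, sum_eps Sn M, hT]
      _ = Real.sqrt (tw * th) * Real.sqrt T * 2 ^ (N * L) := by
          rw [show (2:ℝ) ^ (N * L) * (2 ^ (N * L) * T) = T * ((2:ℝ) ^ (N * L)) ^ 2 by ring,
            Real.sqrt_mul hT0, Real.sqrt_sq (by positivity)]
          ring
  calc TRC q Sn _ ≤ q * (Real.sqrt (tw * th) * Real.sqrt T) := by
        rw [TRC]
        exact mul_le_mul_of_nonneg_left havg hq0
    _ = q * Real.sqrt (tw * th) *
        Real.sqrt ((selMat Sn * (M * Mᵀ) * (selMat Sn)ᵀ).trace) := by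
        rw [htrace]; ring
end

section
/- Let K_f ∈ ℝ^{NL×NL} be symmetric positive semidefinite, let S ∈ {0,1}^{m×NL} be a binary sampling matrix whose rows are m distinct canonical basis rows of ℝ^{NL}, and suppose K̄_f = S K_f Sᵀ ∈ ℝ^{m×m} is positive definite (hence invertible). Fix b > 0 and define the hypothesis class F_R = { F ∈ ℝ^{N×L} : vec(F) = K_f Sᵀ d̄ for some d̄ ∈ ℝ^m with d̄ᵀ K̄_f d̄ ≤ b² }. Let S_n ∈ {0,1}^{n×NL} be the binary selection matrix whose rows correspond (under column-major vectorization) to the index pairs in S_n. Then R_n(F_R) ≤ q·b·√( trace( S_n K_f Sᵀ K̄_f⁻¹ S K_f S_nᵀ ) ). -/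
/-! For a fixed sign pattern `σ`, the entries of `F ∈ F_R` at `S_n` are `B d̄` with
`B = S_n K_f Sᵀ`, so by Cauchy–Schwarz for the dual norms of `K̄_f` and `K̄_f⁻¹` the supremum
over `F_R` is at most `b √(σᵀ M σ)`, where `M = B K̄_f⁻¹ Bᵀ`. Averaging over `σ`, concavity of
the square root and `E[σ σᵀ] = I` bound the expectation by `b √(trace M)`; symmetry of `K_f`
identifies `M` with the matrix of the statement. -/

open Matrix

/-- Column-major vectorization of a real `N × L` matrix: the stacked columns, as a vector
indexed by pairs `(column, row)`. -/
def vecCM {N L : ℕ} (F : Matrix (Fin N) (Fin L) ℝ) : Fin L × Fin N → ℝ :=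
  fun p => F p.2 p.1

/-- The binary sampling matrix in `{0,1}^{m×NL}` whose rows are the canonical basis rows of
`ℝ^{NL}` (indexed in column-major order by `Fin L × Fin N`) selected by `φ` (for injective `φ`,
these are `m` distinct identity rows). -/
def sampMat {N L m : ℕ} (φ : Fin m → Fin L × Fin N) : Matrix (Fin m) (Fin L × Fin N) ℝ :=
  Matrix.of fun r c => if φ r = c then 1 else 0

namespace Matrix

variable {n : Type*} [Fintype n]

theorem PosSemidef.dotProduct_mulVec_sq_le {A : Matrix n n ℝ} (hA : A.PosSemidef) (x y : n → ℝ) :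
    (x ⬝ᵥ (A *ᵥ y)) ^ 2 ≤ (x ⬝ᵥ (A *ᵥ x)) * (y ⬝ᵥ (A *ᵥ y)) := by
  let := A.toSeminormedAddCommGroup hA
  let := A.toInnerProductSpace hA
  have hinner : ∀ x y : n → ℝ, inner ℝ x y = x ⬝ᵥ (A *ᵥ y) := fun x y => dotProduct_comm _ _
  simpa only [sq, hinner] using real_inner_mul_inner_self_le x y

theorem IsHermitian.dotProduct_mulVec_comm {A : Matrix n n ℝ} (hA : A.IsHermitian)
    (x y : n → ℝ) : x ⬝ᵥ (A *ᵥ y) = y ⬝ᵥ (A *ᵥ x) := by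
  rw [dotProduct_mulVec, ← mulVec_transpose, ← conjTranspose_eq_transpose_of_trivial, hA.eq,
    dotProduct_comm]

theorem PosDef.dotProduct_le_sqrt_mul_sqrt [DecidableEq n] {A : Matrix n n ℝ} (hA : A.PosDef)
    (v d : n → ℝ) :
    v ⬝ᵥ d ≤ √(v ⬝ᵥ (A⁻¹ *ᵥ v)) * √(d ⬝ᵥ (A *ᵥ d)) := by
  set w := A⁻¹ *ᵥ v
  have hAw : A *ᵥ w = v := by
    rw [mulVec_mulVec, mul_nonsing_inv _ ((isUnit_iff_isUnit_det A).mp hA.isUnit), one_mulVec]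
  have hvd : v ⬝ᵥ d = w ⬝ᵥ (A *ᵥ d) := by
    rw [hA.isHermitian.dotProduct_mulVec_comm, hAw, dotProduct_comm]
  have hvw : v ⬝ᵥ (A⁻¹ *ᵥ v) = w ⬝ᵥ (A *ᵥ w) := by rw [hAw, dotProduct_comm]
  rw [hvd, hvw, ← Real.sqrt_mul (by simpa using hA.posSemidef.dotProduct_mulVec_nonneg w)]
  exact (le_abs_self _).trans (Real.abs_le_sqrt (hA.posSemidef.dotProduct_mulVec_sq_le w d))

theorem PosDef.dotProduct_mulVec_le_mul_sqrt [DecidableEq n] {ι : Type*} [Fintype ι]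
    {A : Matrix n n ℝ} (hA : A.PosDef) (B : Matrix ι n ℝ) (σ : ι → ℝ) {d : n → ℝ} {b : ℝ}
    (hb : 0 ≤ b) (hd : d ⬝ᵥ (A *ᵥ d) ≤ b ^ 2) :
    σ ⬝ᵥ (B *ᵥ d) ≤ b * √(σ ⬝ᵥ ((B * A⁻¹ * Bᵀ) *ᵥ σ)) := by
  have hdual : (Bᵀ *ᵥ σ) ⬝ᵥ (A⁻¹ *ᵥ (Bᵀ *ᵥ σ)) = σ ⬝ᵥ ((B * A⁻¹ * Bᵀ) *ᵥ σ) := by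
    rw [← mulVec_mulVec, ← mulVec_mulVec, dotProduct_mulVec σ B, ← mulVec_transpose]
  calc σ ⬝ᵥ (B *ᵥ d) = (Bᵀ *ᵥ σ) ⬝ᵥ d := by rw [dotProduct_mulVec, ← mulVec_transpose]
    _ ≤ √((Bᵀ *ᵥ σ) ⬝ᵥ (A⁻¹ *ᵥ (Bᵀ *ᵥ σ))) * √(d ⬝ᵥ (A *ᵥ d)) :=
        hA.dotProduct_le_sqrt_mul_sqrt _ _
    _ ≤ √(σ ⬝ᵥ ((B * A⁻¹ * Bᵀ) *ᵥ σ)) * b := by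
        rw [hdual]
        gcongr
        exact Real.sqrt_le_iff.mpr ⟨hb, hd⟩
    _ = b * √(σ ⬝ᵥ ((B * A⁻¹ * Bᵀ) *ᵥ σ)) := mul_comm _ _

end Matrix

open Finset

def signVec {α : Type*} (ε : α → Bool) : α → ℝ := fun p => if ε p then 1 else -1

section Rademacher

variable {α : Type*} [Fintype α] [DecidableEq α]

theorem sum_signVec_mul_signVec (p p' : α) :
    ∑ ε : α → Bool, signVec ε p * signVec ε p' = if p = p' then 2 ^ Fintype.card α else 0 := by
  split_ifs with h
  · subst h
    have hsq : ∀ ε : α → Bool, signVec ε p * signVec ε p = 1 := fun ε => by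
      unfold signVec; split_ifs <;> norm_num
    simp [hsq]
  · -- flipping the sign at `p` negates the summand, so the terms cancel in pairs
    let flip : (α → Bool) → (α → Bool) := fun ε => Function.update ε p (!ε p)
    refine Finset.sum_ninvolution flip (fun ε => ?_) (fun ε _ => ?_) (fun _ => mem_univ _)
      (fun ε => ?_)
    · simp only [signVec, flip, Function.update_self, Function.update_of_ne (Ne.symm h)]
      cases ε p <;> cases ε p' <;> norm_num
    · simp [flip]
    · simp [flip]

theorem sum_signVec_dotProduct_mulVec {ι : Type*} [Fintype ι] {g : ι → α}
    (hg : Function.Injective g) (M : Matrix ι ι ℝ) :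
    ∑ ε : α → Bool, (signVec ε ∘ g) ⬝ᵥ (M *ᵥ (signVec ε ∘ g)) =
      2 ^ Fintype.card α * M.trace := by
  classical
  have hexpand : ∀ ε : α → Bool, (signVec ε ∘ g) ⬝ᵥ (M *ᵥ (signVec ε ∘ g)) =
      ∑ i, ∑ j, signVec ε (g i) * signVec ε (g j) * M i j := fun ε => by
    simp only [dotProduct, mulVec, Function.comp_apply, mul_sum]
    exact sum_congr rfl fun i _ => sum_congr rfl fun j _ => by ring
  calc ∑ ε : α → Bool, (signVec ε ∘ g) ⬝ᵥ (M *ᵥ (signVec ε ∘ g))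
      = ∑ i, ∑ j, (∑ ε : α → Bool, signVec ε (g i) * signVec ε (g j)) * M i j := by
        simp_rw [hexpand, sum_mul]
        rw [sum_comm]
        exact sum_congr rfl fun i _ => sum_comm
    _ = 2 ^ Fintype.card α * M.trace := by
        simp only [sum_signVec_mul_signVec, hg.eq_iff, ite_mul, zero_mul, sum_ite_eq,
          mem_univ, if_true, Matrix.trace, Matrix.diag_apply, mul_sum]

theorem sum_sqrt_signVec_dotProduct_mulVec_le {ι : Type*} [Fintype ι] {g : ι → α}
    (hg : Function.Injective g) {M : Matrix ι ι ℝ} (hM : M.PosSemidef) :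
    ∑ ε : α → Bool, √((signVec ε ∘ g) ⬝ᵥ (M *ᵥ (signVec ε ∘ g))) ≤
      2 ^ Fintype.card α * √M.trace := by
  have hquad : ∀ ε : α → Bool, 0 ≤ (signVec ε ∘ g) ⬝ᵥ (M *ᵥ (signVec ε ∘ g)) := fun ε => by
    simpa using hM.dotProduct_mulVec_nonneg (signVec ε ∘ g)
  calc ∑ ε : α → Bool, √((signVec ε ∘ g) ⬝ᵥ (M *ᵥ (signVec ε ∘ g)))
      = ∑ ε : α → Bool, √1 * √((signVec ε ∘ g) ⬝ᵥ (M *ᵥ (signVec ε ∘ g))) := by simp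
    _ ≤ √(∑ _ε : α → Bool, 1) * √(∑ ε : α → Bool, (signVec ε ∘ g) ⬝ᵥ (M *ᵥ (signVec ε ∘ g))) :=
        Real.sum_sqrt_mul_sqrt_le _ (fun _ => zero_le_one) hquad
    _ = 2 ^ Fintype.card α * √M.trace := by
        have hcard : ∑ _ε : α → Bool, (1 : ℝ) = 2 ^ Fintype.card α := by simp
        rw [hcard, sum_signVec_dotProduct_mulVec hg, ← Real.sqrt_mul (by positivity), ← mul_assoc,
          ← sq, Real.sqrt_mul (sq_nonneg _), Real.sqrt_sq (by positivity)]

end Rademacher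

section KernelClass

variable {N L m : ℕ}

def kernelClass (Kf : Matrix (Fin L × Fin N) (Fin L × Fin N) ℝ) (φ : Fin m → Fin L × Fin N)
    (b : ℝ) : Set (Matrix (Fin N) (Fin L) ℝ) :=
  {F | ∃ dbar : Fin m → ℝ, vecCM F = (Kf * (sampMat φ)ᵀ) *ᵥ dbar ∧
    dbar ⬝ᵥ ((sampMat φ * Kf * (sampMat φ)ᵀ) *ᵥ dbar) ≤ b ^ 2}

theorem selMat_mulVec_vecCM (Sn : Finset (Fin N × Fin L)) (F : Matrix (Fin N) (Fin L) ℝ) :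
    selMat Sn *ᵥ vecCM F = fun r => F r.1.1 r.1.2 := by
  ext r
  simp [selMat, mulVec, dotProduct, vecCM, ite_mul]

theorem sum_signVec_mul_apply (Sn : Finset (Fin N × Fin L)) (ε : Fin N × Fin L → Bool)
    (F : Matrix (Fin N) (Fin L) ℝ) :
    ∑ p ∈ Sn, signVec ε p * F p.1 p.2 =
      (signVec ε ∘ Subtype.val) ⬝ᵥ (selMat Sn *ᵥ vecCM F) := by
  rw [selMat_mulVec_vecCM, ← Finset.sum_coe_sort Sn]
  rfl

theorem sSup_sum_signVec_mul_le {Kf : Matrix (Fin L × Fin N) (Fin L × Fin N) ℝ}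
    {φ : Fin m → Fin L × Fin N} (hKbar : (sampMat φ * Kf * (sampMat φ)ᵀ).PosDef) {b : ℝ}
    (hb : 0 ≤ b) (Sn : Finset (Fin N × Fin L)) (ε : Fin N × Fin L → Bool) :
    sSup ((fun F => ∑ p ∈ Sn, signVec ε p * F p.1 p.2) '' kernelClass Kf φ b) ≤
      b * √((signVec ε ∘ Subtype.val) ⬝ᵥ
        ((selMat Sn * Kf * (sampMat φ)ᵀ * (sampMat φ * Kf * (sampMat φ)ᵀ)⁻¹ *
          (selMat Sn * Kf * (sampMat φ)ᵀ)ᵀ) *ᵥ (signVec ε ∘ Subtype.val))) := by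
  refine Real.sSup_le ?_ (by positivity)
  rintro _ ⟨F, ⟨dbar, hF, hdbar⟩, rfl⟩
  have hrow : selMat Sn *ᵥ vecCM F = (selMat Sn * Kf * (sampMat φ)ᵀ) *ᵥ dbar := by
    rw [hF, mulVec_mulVec, Matrix.mul_assoc]
  dsimp only
  rw [sum_signVec_mul_apply, hrow]
  exact hKbar.dotProduct_mulVec_le_mul_sqrt _ _ hb hdbar

end KernelClass

theorem trc_kkmcex_le_general {N L : ℕ} (m u : ℕ)
    (Sn : Finset (Fin N × Fin L))
    (q : ℝ) (hq : q = 1 / m + 1 / u)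
    (Kf : Matrix (Fin L × Fin N) (Fin L × Fin N) ℝ) (hKf : Kf.PosSemidef)
    (φ : Fin m → Fin L × Fin N)
    (hKbar : (sampMat φ * Kf * (sampMat φ)ᵀ).PosDef)
    (b : ℝ) (hb : 0 < b) :
    TRC q Sn {F : Matrix (Fin N) (Fin L) ℝ |
        ∃ dbar : Fin m → ℝ,
          vecCM F = (Kf * (sampMat φ)ᵀ) *ᵥ dbar ∧
          dbar ⬝ᵥ ((sampMat φ * Kf * (sampMat φ)ᵀ) *ᵥ dbar) ≤ b ^ 2} ≤
      q * b * Real.sqrt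
        ((selMat Sn * Kf * (sampMat φ)ᵀ * (sampMat φ * Kf * (sampMat φ)ᵀ)⁻¹ *
          (sampMat φ * Kf) * (selMat Sn)ᵀ).trace) := by
  set B := selMat Sn * Kf * (sampMat φ)ᵀ
  set M := B * (sampMat φ * Kf * (sampMat φ)ᵀ)⁻¹ * Bᵀ
  have hM : M.PosSemidef := hKbar.inv.posSemidef.mul_mul_conjTranspose_same B
  have htrace : B * (sampMat φ * Kf * (sampMat φ)ᵀ)⁻¹ * (sampMat φ * Kf) * (selMat Sn)ᵀ = M := by
    simp only [M, B, transpose_mul, transpose_transpose, Matrix.mul_assoc,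
      ← conjTranspose_eq_transpose_of_trivial Kf, hKf.isHermitian.eq]
  have hsum : ∑ ε : Fin N × Fin L → Bool,
      sSup ((fun F => ∑ p ∈ Sn, signVec ε p * F p.1 p.2) '' kernelClass Kf φ b) ≤
        2 ^ (N * L) * (b * √M.trace) := by
    calc _ ≤ ∑ ε : Fin N × Fin L → Bool,
          b * √((signVec ε ∘ Subtype.val) ⬝ᵥ (M *ᵥ (signVec ε ∘ Subtype.val))) :=
          Finset.sum_le_sum fun ε _ => sSup_sum_signVec_mul_le hKbar hb.le Sn ε
      _ ≤ b * (2 ^ (N * L) * √M.trace) := by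
          rw [← Finset.mul_sum]
          gcongr
          simpa using sum_sqrt_signVec_dotProduct_mulVec_le Subtype.val_injective hM
      _ = 2 ^ (N * L) * (b * √M.trace) := by ring
  have hq0 : 0 ≤ q := hq ▸ by positivity
  rw [htrace]
  calc TRC q Sn (kernelClass Kf φ b) ≤ q * (2 ^ (N * L) * (b * √M.trace) / 2 ^ (N * L)) := by
        unfold TRC
        gcongr
        exact hsum
    _ = q * b * √M.trace := by field_simp

/-- Let `K_f ∈ ℝ^{NL×NL}` be symmetric positive semidefinite, let
`S ∈ {0,1}^{m×NL}` be a binary sampling matrix whose rows are `m` distinct canonical basis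
rows, and suppose `K̄_f = S K_f Sᵀ` is positive definite.  Fix `b > 0` and let `F_R` be the
class of matrices `F` with `vec(F) = K_f Sᵀ d̄` for some `d̄ ∈ ℝ^m` with `d̄ᵀ K̄_f d̄ ≤ b²`.
Then, with `S_n` the binary selection matrix of the index set `S_n`,
`R_n(F_R) ≤ q b √(trace(S_n K_f Sᵀ K̄_f⁻¹ S K_f S_nᵀ))`. -/
theorem trc_kkmcex_le {N L : ℕ} (m u : ℕ) (hm : 1 ≤ m) (hu : 1 ≤ u)
    (Sn : Finset (Fin N × Fin L)) (hSn : Sn.card = m + u)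
    (q : ℝ) (hq : q = 1 / m + 1 / u)
    (Kf : Matrix (Fin L × Fin N) (Fin L × Fin N) ℝ) (hKf : Kf.PosSemidef)
    (φ : Fin m → Fin L × Fin N) (hφ : Function.Injective φ)
    (hKbar : (sampMat φ * Kf * (sampMat φ)ᵀ).PosDef)
    (b : ℝ) (hb : 0 < b) :
    TRC q Sn {F : Matrix (Fin N) (Fin L) ℝ |
        ∃ dbar : Fin m → ℝ,
          vecCM F = (Kf * (sampMat φ)ᵀ) *ᵥ dbar ∧
          dbar ⬝ᵥ ((sampMat φ * Kf * (sampMat φ)ᵀ) *ᵥ dbar) ≤ b ^ 2} ≤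
      q * b * Real.sqrt
        ((selMat Sn * Kf * (sampMat φ)ᵀ * (sampMat φ * Kf * (sampMat φ)ᵀ)⁻¹ *
          (sampMat φ * Kf) * (selMat Sn)ᵀ).trace) :=
  trc_kkmcex_le_general m u Sn q hq Kf hKf φ hKbar b hb
end

section
/- Let Φ_w ∈ ℝ^{N×d_w} have rank d_w and Φ_h ∈ ℝ^{L×d_h} have rank d_h, and set K_w = Φ_w Φ_wᵀ and K_h = Φ_h Φ_hᵀ. Then for every p ≥ 1 and every t > 0, the two hypothesis classes coincide: { K_w B Cᵀ K_h : B ∈ ℝ^{N×p}, C ∈ ℝ^{L×p}, trace(Bᵀ K_w B) + trace(Cᵀ K_h C) ≤ t } = { Φ_w A_w A_hᵀ Φ_hᵀ : A_w ∈ ℝ^{d_w×p}, A_h ∈ ℝ^{d_h×p}, ‖A_w‖_F² + ‖A_h‖_F² ≤ t }. -/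
open Matrix

lemma frobSq_eq_trace {m n : ℕ} (A : Matrix (Fin m) (Fin n) ℝ) :
    frobSq A = (Aᵀ * A).trace := by
  simp only [frobSq, Matrix.trace, Matrix.diag, Matrix.mul_apply, Matrix.transpose_apply, sq]
  exact Finset.sum_comm

lemma gram_isUnit {N d : ℕ} (Φ : Matrix (Fin N) (Fin d) ℝ) (h : Φ.rank = d) :
    IsUnit (Φᵀ * Φ).det := by
  rw [← Matrix.isUnit_iff_isUnit_det, ← Matrix.mulVec_surjective_iff_isUnit]
  have hrank : (Φᵀ * Φ).rank = d := by rw [Matrix.rank_transpose_mul_self, h]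
  have htop : LinearMap.range (Φᵀ * Φ).mulVecLin = ⊤ := by
    apply Submodule.eq_top_of_finrank_eq
    rw [← Matrix.rank, hrank, Module.finrank_pi]
    simp
  intro v
  have : v ∈ LinearMap.range (Φᵀ * Φ).mulVecLin := htop ▸ Submodule.mem_top
  obtain ⟨x, hx⟩ := this
  exact ⟨x, hx⟩

/-- Let `Φ_w ∈ ℝ^{N×d_w}` have rank `d_w` and `Φ_h ∈ ℝ^{L×d_h}` have rank
`d_h` (full column rank), and set `K_w = Φ_w Φ_wᵀ`, `K_h = Φ_h Φ_hᵀ`.  Then for every `p ≥ 1`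
and every `t > 0` the KMC hypothesis class `{K_w B Cᵀ K_h : trace(Bᵀ K_w B) + trace(Cᵀ K_h C) ≤ t}`
coincides with the inductive class `{Φ_w A_w A_hᵀ Φ_hᵀ : ‖A_w‖_F² + ‖A_h‖_F² ≤ t}`. -/
theorem kmc_class_eq_inductive_class {N L dw dh : ℕ}
    (Φw : Matrix (Fin N) (Fin dw) ℝ) (Φh : Matrix (Fin L) (Fin dh) ℝ)
    (hw : Φw.rank = dw) (hh : Φh.rank = dh)
    (p : ℕ) (hp : 1 ≤ p) (t : ℝ) (ht : 0 < t) :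
    {F : Matrix (Fin N) (Fin L) ℝ |
        ∃ (B : Matrix (Fin N) (Fin p) ℝ) (C : Matrix (Fin L) (Fin p) ℝ),
          F = (Φw * Φwᵀ) * B * Cᵀ * (Φh * Φhᵀ) ∧
          (Bᵀ * (Φw * Φwᵀ) * B).trace + (Cᵀ * (Φh * Φhᵀ) * C).trace ≤ t} =
      {F : Matrix (Fin N) (Fin L) ℝ |
        ∃ (Aw : Matrix (Fin dw) (Fin p) ℝ) (Ah : Matrix (Fin dh) (Fin p) ℝ),
          F = Φw * Aw * Ahᵀ * Φhᵀ ∧ frobSq Aw + frobSq Ah ≤ t} := by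
  ext F
  constructor
  · rintro ⟨B, C, rfl, hbc⟩
    refine ⟨Φwᵀ * B, Φhᵀ * C, ?_, ?_⟩
    · simp only [Matrix.transpose_mul, Matrix.transpose_transpose, Matrix.mul_assoc]
    · rw [frobSq_eq_trace, frobSq_eq_trace]
      simp only [Matrix.transpose_mul, Matrix.transpose_transpose, Matrix.mul_assoc] at hbc ⊢
      exact hbc
  · rintro ⟨Aw, Ah, rfl, hA⟩
    have hgw := gram_isUnit Φw hw
    have hgh := gram_isUnit Φh hh
    set Gw := (Φwᵀ * Φw)⁻¹
    set Gh := (Φhᵀ * Φh)⁻¹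
    have hGw : Φwᵀ * Φw * Gw = 1 := Matrix.mul_nonsing_inv _ hgw
    have hGh : Φhᵀ * Φh * Gh = 1 := Matrix.mul_nonsing_inv _ hgh
    refine ⟨Φw * Gw * Aw, Φh * Gh * Ah, ?_, ?_⟩
    · have h1 : Φwᵀ * (Φw * Gw * Aw) = Aw := by
        rw [← Matrix.mul_assoc, ← Matrix.mul_assoc, hGw, Matrix.one_mul]
      have h2 : Φhᵀ * (Φh * Gh * Ah) = Ah := by
        rw [← Matrix.mul_assoc, ← Matrix.mul_assoc, hGh, Matrix.one_mul]
      calc Φw * Aw * Ahᵀ * Φhᵀ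
          = Φw * (Φwᵀ * (Φw * Gw * Aw)) * (Φhᵀ * (Φh * Gh * Ah))ᵀ * Φhᵀ := by rw [h1, h2]
        _ = Φw * Φwᵀ * (Φw * Gw * Aw) * (Φh * Gh * Ah)ᵀ * (Φh * Φhᵀ) := by
            simp only [Matrix.transpose_mul, Matrix.transpose_transpose, Matrix.mul_assoc]
    · have h1 : Φwᵀ * (Φw * Gw * Aw) = Aw := by
        rw [← Matrix.mul_assoc, ← Matrix.mul_assoc, hGw, Matrix.one_mul]
      have h2 : Φhᵀ * (Φh * Gh * Ah) = Ah := by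
        rw [← Matrix.mul_assoc, ← Matrix.mul_assoc, hGh, Matrix.one_mul]
      have e1 : ((Φw * Gw * Aw)ᵀ * (Φw * Φwᵀ) * (Φw * Gw * Aw)).trace = frobSq Aw := by
        rw [frobSq_eq_trace]
        congr 1
        calc (Φw * Gw * Aw)ᵀ * (Φw * Φwᵀ) * (Φw * Gw * Aw)
            = (Φwᵀ * (Φw * Gw * Aw))ᵀ * (Φwᵀ * (Φw * Gw * Aw)) := by
              simp only [Matrix.transpose_mul, Matrix.transpose_transpose, Matrix.mul_assoc]
          _ = Awᵀ * Aw := by rw [h1]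
      have e2 : ((Φh * Gh * Ah)ᵀ * (Φh * Φhᵀ) * (Φh * Gh * Ah)).trace = frobSq Ah := by
        rw [frobSq_eq_trace]
        congr 1
        calc (Φh * Gh * Ah)ᵀ * (Φh * Φhᵀ) * (Φh * Gh * Ah)
            = (Φhᵀ * (Φh * Gh * Ah))ᵀ * (Φhᵀ * (Φh * Gh * Ah)) := by
              simp only [Matrix.transpose_mul, Matrix.transpose_transpose, Matrix.mul_assoc]
          _ = Ahᵀ * Ah := by rw [h2]
      rw [e1, e2]; exact hA
end
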